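/- arXiv:2506.06264 — 2 statements merged into one kernel-verified Lean document; each statement's English description precedes it below -/
import Mathlib

section
/- Let ω ∈ ℤⁿ and let b₀,…,b_k ∈ ℂ[x₁,…,xₙ] be nonzero polynomials such that for each j the initial form in_ω(b_j) is a single term with exponent α_j; set ν := (⟨ω,α₀⟩,…,⟨ω,α_k⟩) ∈ ℤ^{k+1}. Let p ∈ ℂ[z₀,…,z_k] be ν-homogeneous of degree i, i.e., every monomial z^a appearing in p satisfies ⟨ν,a⟩ = i. Assume that q := p(b₀,…,b_k) is nonzero and that v_ω(q) = i (no cancellation of top ω-degree terms occurs). Then the ω-homogenization of the substituted polynomial equals the substitution of the ω-homogenizations: [p(b₀,…,b_k)]_t^ω = p(b₀,ₜ^ω,…,b_k,ₜ^ω), where on the right-hand side p is evaluated in ℂ[x₁,…,xₙ][t] by sending z_j ↦ (b_j)_t^ω. -/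
open MvPolynomial Polynomial

noncomputable section

/-- The weighted dot product `⟨ω, α⟩ = Σ_i ω_i · α_i`. -/
def wdot {σ : Type*} (ω : σ → ℤ) (α : σ →₀ ℕ) : ℤ :=
  α.sum fun i e => ω i * (e : ℤ)

/-- The ω-degree `v_ω(f) = max{⟨ω,α⟩ : α ∈ supp f}` (junk value `0` for `f = 0`). -/
def wdeg {σ : Type*} (ω : σ → ℤ) (f : MvPolynomial σ ℂ) : ℤ :=
  WithBot.unbotD 0 (f.support.sup fun α => (wdot ω α : WithBot ℤ))

/-- The initial form `in_ω(f)`, the sum of the terms of `f` of maximal ω-degree. -/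
def initForm {σ : Type*} (ω : σ → ℤ) (f : MvPolynomial σ ℂ) : MvPolynomial σ ℂ :=
  ∑ α ∈ f.support.filter (fun α => wdot ω α = wdeg ω f), monomial α (f.coeff α)

/-- The ω-homogenization `f_t^ω = Σ_α c_α t^{v_ω(f) − ⟨ω,α⟩} x^α ∈ ℂ[x₁,…,xₙ][t]`. -/
def homog {σ : Type*} (ω : σ → ℤ) (f : MvPolynomial σ ℂ) :
    Polynomial (MvPolynomial σ ℂ) :=
  ∑ α ∈ f.support,
    Polynomial.C (monomial α (f.coeff α)) * Polynomial.X ^ (wdeg ω f - wdot ω α).toNat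

/-! Inside Laurent polynomials `ℂ[x][t, t⁻¹]` one has `f_t^ω = t^{v_ω(f)} ψ(f)`, where `ψ` is
the algebra homomorphism `x_i ↦ t^{-ω_i} x_i`. As `v_ω(b_j) = ν_j`, substituting
`(b_j)_t^ω = t^{ν_j} ψ(b_j)` into the ν-homogeneous `p` pulls out `t^i`, which leaves
`t^i ψ(p(b)) = t^{v_ω(q)} ψ(q) = q_t^ω`. -/

open Finsupp LaurentPolynomial

theorem Finsupp.weight_neg {σ : Type*} (w : σ → ℤ) (d : σ →₀ ℕ) :
    weight (-w) d = -weight w d := by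
  simp [weight_apply, Finsupp.sum]

theorem LaurentPolynomial.T_sum {R ι : Type*} [CommSemiring R] (s : Finset ι) (f : ι → ℤ) :
    (T (∑ i ∈ s, f i) : R[T;T⁻¹]) = ∏ i ∈ s, T (f i) :=
  map_prod (AddMonoidAlgebra.of R ℤ) (fun i => Multiplicative.ofAdd (f i)) s

theorem LaurentPolynomial.T_weight {R σ : Type*} [CommSemiring R] (w : σ → ℤ)
    (d : σ →₀ ℕ) :
    (T (weight w d) : R[T;T⁻¹]) = d.prod fun j e => T (w j) ^ e := by
  simp only [weight_apply, Finsupp.sum, Finsupp.prod, T_pow, nsmul_eq_mul, T_sum]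

section Twist

variable {R A σ : Type*} [CommSemiring R] [CommSemiring A] [Algebra R A]

theorem MvPolynomial.IsWeightedHomogeneous.aeval_mul_T {w : σ → ℤ} {m : ℤ}
    {p : MvPolynomial σ R} (hp : p.IsWeightedHomogeneous w m) (g : σ → A[T;T⁻¹]) :
    aeval (fun j => g j * T (w j)) p = T m * aeval g p := by
  induction hp using IsWeightedHomogeneous.induction_on with
  | zero => simp
  | add p q _ _ hp hq => simp only [map_add, hp, hq, mul_add]
  | monomial d r hd =>
    simp only [aeval_monomial, mul_pow, Finsupp.prod_mul, ← hd, T_weight]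
    ring

def weightTwist (ω : σ → ℤ) : MvPolynomial σ R →ₐ[R] (MvPolynomial σ R)[T;T⁻¹] :=
  aeval fun i => LaurentPolynomial.C (X i) * T ((-ω) i)

theorem weightTwist_monomial (ω : σ → ℤ) (d : σ →₀ ℕ) (r : R) :
    weightTwist ω (monomial d r) = T (-weight ω d) * LaurentPolynomial.C (monomial d r) := by
  rw [weightTwist, (isWeightedHomogeneous_monomial (-ω) d r rfl).aeval_mul_T, weight_neg]
  simp [monomial_eq, LaurentPolynomial.algebraMap_apply, map_finsuppProd]

end Twist

theorem wdot_eq_weight {σ : Type*} (ω : σ → ℤ) (d : σ →₀ ℕ) : wdot ω d = weight ω d := by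
  simp [wdot, weight_apply, mul_comm]

section WeightedDegree

variable {σ : Type*} {ω : σ → ℤ} {f : MvPolynomial σ ℂ}

theorem wdot_le_wdeg {d : σ →₀ ℕ} (hd : d ∈ f.support) : wdot ω d ≤ wdeg ω f :=
  WithBot.le_unbotD (Finset.le_sup (f := fun d => (wdot ω d : WithBot ℤ)) hd)

theorem coeff_initForm_of_wdot_ne {d : σ →₀ ℕ} (hd : wdot ω d ≠ wdeg ω f) :
    (initForm ω f).coeff d = 0 := by
  classical
  simp only [initForm, MvPolynomial.coeff_sum, MvPolynomial.coeff_monomial,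
    Finset.sum_ite_eq', Finset.mem_filter, hd, and_false, if_false]

theorem wdeg_eq_of_initForm_eq_monomial {d : σ →₀ ℕ} {c : ℂ} (hc : c ≠ 0)
    (h : initForm ω f = monomial d c) : wdeg ω f = wdot ω d := by
  classical
  by_contra hne
  simpa [h, hc] using coeff_initForm_of_wdot_ne (f := f) (Ne.symm hne)

theorem toLaurent_homog (ω : σ → ℤ) (f : MvPolynomial σ ℂ) :
    toLaurent (homog ω f) = T (wdeg ω f) * weightTwist ω f := by
  conv_rhs => arg 2; rw [← f.support_sum_monomial_coeff]
  rw [homog, map_sum, map_sum, Finset.mul_sum]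
  refine Finset.sum_congr rfl fun d hd => ?_
  rw [weightTwist_monomial, map_mul, toLaurent_C, toLaurent_X_pow,
    Int.toNat_of_nonneg (sub_nonneg.mpr (wdot_le_wdeg hd)), sub_eq_add_neg, T_add,
    wdot_eq_weight]
  ring

end WeightedDegree

theorem homog_aeval_of_nu_homogeneous_general {n k : ℕ} (ω : Fin n → ℤ)
    (b : Fin (k + 1) → MvPolynomial (Fin n) ℂ)
    (α : Fin (k + 1) → (Fin n →₀ ℕ)) (c : Fin (k + 1) → ℂ) (hc : ∀ j, c j ≠ 0)
    (hin : ∀ j, initForm ω (b j) = monomial (α j) (c j))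
    (ν : Fin (k + 1) → ℤ) (hν : ν = fun j => wdot ω (α j))
    (p : MvPolynomial (Fin (k + 1)) ℂ) (i : ℤ)
    (hhom : ∀ a ∈ p.support, wdot ν a = i)
    (hdeg : wdeg ω (MvPolynomial.aeval b p) = i) :
    homog ω (MvPolynomial.aeval b p) =
      MvPolynomial.aeval (fun j => homog ω (b j)) p := by
  have hb : ∀ j, wdeg ω (b j) = ν j := fun j => by
    rw [hν, wdeg_eq_of_initForm_eq_monomial (hc j) (hin j)]
  have hp : p.IsWeightedHomogeneous ν i := fun a ha =>
    wdot_eq_weight ν a ▸ hhom a (MvPolynomial.mem_support_iff.mpr ha)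
  apply toLaurent_injective
  calc toLaurent (homog ω (MvPolynomial.aeval b p))
      _ = T i * weightTwist ω (MvPolynomial.aeval b p) := by rw [toLaurent_homog, hdeg]
      _ = T i * MvPolynomial.aeval (fun j => weightTwist ω (b j)) p := by rw [comp_aeval_apply]
      _ = MvPolynomial.aeval (fun j => weightTwist ω (b j) * T (ν j)) p := (hp.aeval_mul_T _).symm
      _ = MvPolynomial.aeval (fun j => toLaurent (homog ω (b j))) p := by
        simp only [toLaurent_homog, hb, mul_comm]
      _ = toLaurent (MvPolynomial.aeval (fun j => homog ω (b j)) p) :=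
        (comp_aeval_apply _ (toLaurentAlg.restrictScalars ℂ) p).symm

/-- Let `b₀,…,b_k` be nonzero polynomials whose initial forms are single
terms `in_ω(b_j) = c_j x^{α_j}`, and let `ν := (⟨ω,α₀⟩,…,⟨ω,α_k⟩)`. If `p ∈ ℂ[z₀,…,z_k]`
is ν-homogeneous of degree `i`, `q := p(b₀,…,b_k)` is nonzero and `v_ω(q) = i` (no
cancellation of top ω-degree terms), then `[p(b₀,…,b_k)]_t^ω = p(b₀,ₜ^ω,…,b_k,ₜ^ω)`. -/
theorem homog_aeval_of_nu_homogeneous {n k : ℕ} (ω : Fin n → ℤ)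
    (b : Fin (k + 1) → MvPolynomial (Fin n) ℂ) (hb : ∀ j, b j ≠ 0)
    (α : Fin (k + 1) → (Fin n →₀ ℕ)) (c : Fin (k + 1) → ℂ) (hc : ∀ j, c j ≠ 0)
    (hin : ∀ j, initForm ω (b j) = monomial (α j) (c j))
    (ν : Fin (k + 1) → ℤ) (hν : ν = fun j => wdot ω (α j))
    (p : MvPolynomial (Fin (k + 1)) ℂ) (i : ℤ)
    (hhom : ∀ a ∈ p.support, wdot ν a = i)
    (hq : MvPolynomial.aeval b p ≠ 0)
    (hdeg : wdeg ω (MvPolynomial.aeval b p) = i) :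
    homog ω (MvPolynomial.aeval b p) =
      MvPolynomial.aeval (fun j => homog ω (b j)) p :=
  homog_aeval_of_nu_homogeneous_general ω b α c hc hin ν hν p i hhom hdeg
end
end

section
/- Let I ⊆ ℂ[z₀,…,z_k] be an ideal and v ∈ ℤ^{k+1} a weight vector. Then the quotient ring ℂ[z₀,…,z_k][t]/I_t^v is flat as a module over the polynomial ring ℂ[t], via the natural map ℂ[t] → ℂ[z₀,…,z_k][t] → ℂ[z₀,…,z_k][t]/I_t^v. -/
open MvPolynomial Polynomial

noncomputable section

/-- The homogenized ideal `I_t^ν`, generated by `{f_t^ν : f ∈ I, f ≠ 0}`. -/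
def idealHomog {σ : Type*} (ν : σ → ℤ) (I : Ideal (MvPolynomial σ ℂ)) :
    Ideal (Polynomial (MvPolynomial σ ℂ)) :=
  Ideal.span {g | ∃ f ∈ I, f ≠ 0 ∧ g = homog ν f}

/-- The initial ideal `in_ν(I)`, generated by `{in_ν(f) : f ∈ I, f ≠ 0}`. -/
def initIdeal {σ : Type*} (ν : σ → ℤ) (I : Ideal (MvPolynomial σ ℂ)) :
    Ideal (MvPolynomial σ ℂ) :=
  Ideal.span {g | ∃ f ∈ I, f ≠ 0 ∧ g = initForm ν f}

/-- `{b i}` is a SAGBI basis for `S = ℂ[b₀,…,b_k]` with respect to `ω` if the ℂ-linear span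
of `{in_ω(f) : f ∈ S, f ≠ 0}` equals the ℂ-subalgebra generated by the `in_ω(b_i)`. -/
def IsSagbiBasis {σ : Type*} {ι : Type*} (ω : σ → ℤ) (b : ι → MvPolynomial σ ℂ) : Prop :=
  Submodule.span ℂ
      {g | ∃ f ∈ Algebra.adjoin ℂ (Set.range b), f ≠ 0 ∧ g = initForm ω f}
    = Subalgebra.toSubmodule (Algebra.adjoin ℂ (Set.range fun i => initForm ω (b i)))

/-!
Over the principal ideal domain `ℂ[t]` flatness is torsion-freeness, so we show that
`p(t) · F ∈ I_t^v` with `p ≠ 0` forces `F ∈ I_t^v`. Grade `ℂ[z][t]` by giving `z^α t^e` the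
weight `⟨v, α⟩ + e`. The generators of `I_t^v` are homogeneous, and a homogeneous `G` with
`G(t = 1) ∈ I` lies in `I_t^v` since `G = t^s · (G(t = 1))_t^v`; hence `G ∈ I_t^v` iff every
component satisfies `G_m(t = 1) ∈ I`. With `y_m = F_m(t = 1)` the hypothesis reads
`Σ_j p_j y_{m-j} ∈ I` for all `m`; at the least `m` with `y_m ∉ I` only the trailing
coefficient of `p` contributes, so there is no such `m`.
-/

section TGrading

variable {σ R : Type*} [CommSemiring R] (v : σ → ℤ)

/-- Homogeneity for the grading in which `z^α X^e` has weight `⟨v, α⟩ + e`. -/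
def IsTHomogeneous (n : ℤ) (F : (MvPolynomial σ R)[X]) : Prop :=
  ∀ e : ℕ, (F.coeff e).IsWeightedHomogeneous v (n - e)

def tComponent (n : ℤ) : (MvPolynomial σ R)[X] →ₗ[R] (MvPolynomial σ R)[X] :=
  Polynomial.lsum fun e =>
    ((Polynomial.monomial e).restrictScalars R).comp (weightedHomogeneousComponent v (n - e))

@[simp]
lemma coeff_tComponent (n : ℤ) (F : (MvPolynomial σ R)[X]) (e : ℕ) :
    (tComponent v n F).coeff e = weightedHomogeneousComponent v (n - e) (F.coeff e) := by
  classical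
  simp only [tComponent, lsum_apply, LinearMap.coe_comp, LinearMap.coe_restrictScalars,
    Function.comp_apply, Polynomial.sum_def, finsetSum_coeff, Polynomial.coeff_monomial,
    Finset.sum_ite_eq', Polynomial.mem_support_iff, ite_not, ite_eq_right_iff]
  intro h
  simp [h]

lemma isTHomogeneous_tComponent (n : ℤ) (F : (MvPolynomial σ R)[X]) :
    IsTHomogeneous v n (tComponent v n F) := fun e => by
  rw [coeff_tComponent]
  exact weightedHomogeneousComponent_isWeightedHomogeneous _ _

variable {v} in
lemma IsTHomogeneous.tComponent_eq {n : ℤ} {F : (MvPolynomial σ R)[X]}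
    (hF : IsTHomogeneous v n F) (m : ℤ) : tComponent v m F = if m = n then F else 0 := by
  ext1 e
  rw [coeff_tComponent, weightedHomogeneousComponent_of_mem (hF e)]
  split_ifs <;> first | rfl | omega

lemma isTHomogeneous_C_mul_X_pow (a : R) (j : ℕ) :
    IsTHomogeneous v j
      (Polynomial.C (MvPolynomial.C a) * Polynomial.X ^ j : (MvPolynomial σ R)[X]) := by
  intro e
  rw [Polynomial.coeff_C_mul_X_pow]
  split_ifs with h
  · subst h
    simpa using isWeightedHomogeneous_C v a
  · exact isWeightedHomogeneous_zero R v _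

variable {v} in
lemma weightedHomogeneousComponent_mul_of_isWeightedHomogeneous {g : MvPolynomial σ R} {u : ℤ}
    (hg : g.IsWeightedHomogeneous v u) (q : ℤ) (f : MvPolynomial σ R) :
    weightedHomogeneousComponent v q (g * f) = g * weightedHomogeneousComponent v (q - u) f := by
  induction f using MvPolynomial.induction_on' with
  | monomial d a =>
    have hgd := hg.mul (isWeightedHomogeneous_monomial v d a rfl)
    rw [weightedHomogeneousComponent_of_mem hgd,
      weightedHomogeneousComponent_of_mem (isWeightedHomogeneous_monomial v d a rfl)]
    split_ifs <;> first | rfl | omega | simp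
  | add f₁ f₂ h₁ h₂ => rw [mul_add, map_add, map_add, h₁, h₂, mul_add]

variable {v} in
lemma tComponent_mul_of_isTHomogeneous {n : ℤ} {g : (MvPolynomial σ R)[X]}
    (hg : IsTHomogeneous v n g) (m : ℤ) (F : (MvPolynomial σ R)[X]) :
    tComponent v m (g * F) = g * tComponent v (m - n) F := by
  ext1 e
  rw [coeff_tComponent, Polynomial.coeff_mul, Polynomial.coeff_mul, map_sum]
  refine Finset.sum_congr rfl fun x hx => ?_
  rw [Finset.HasAntidiagonal.mem_antidiagonal] at hx
  rw [coeff_tComponent, weightedHomogeneousComponent_mul_of_isWeightedHomogeneous (hg x.1),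
    show m - e - (n - x.1) = m - n - x.2 by omega]

def tWeights (F : (MvPolynomial σ R)[X]) : Finset ℤ :=
  F.support.biUnion fun e => (F.coeff e).support.image fun α => Finsupp.weight v α + e

lemma mem_tWeights {F : (MvPolynomial σ R)[X]} {e : ℕ} {α : σ →₀ ℕ}
    (h : (F.coeff e).coeff α ≠ 0) : Finsupp.weight v α + e ∈ tWeights v F := by
  refine Finset.mem_biUnion.mpr ⟨e, ?_, Finset.mem_image_of_mem _ (mem_support_iff.mpr h)⟩
  exact Polynomial.mem_support_iff.mpr fun h0 => h (by rw [h0, MvPolynomial.coeff_zero])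

lemma tComponent_eq_zero_of_notMem {F : (MvPolynomial σ R)[X]} {m : ℤ} (hm : m ∉ tWeights v F) :
    tComponent v m F = 0 := by
  ext1 e
  rw [coeff_tComponent, Polynomial.coeff_zero]
  refine weightedHomogeneousComponent_eq_zero' _ _ fun α hα hw => hm ?_
  rw [← sub_add_cancel m e, ← hw]
  exact mem_tWeights v (mem_support_iff.mp hα)

lemma sum_tComponent (F : (MvPolynomial σ R)[X]) : ∑ m ∈ tWeights v F, tComponent v m F = F := by
  ext e β
  simp only [finsetSum_coeff, coeff_tComponent, MvPolynomial.coeff_sum,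
    coeff_weightedHomogeneousComponent]
  rw [Finset.sum_eq_single (Finsupp.weight v β + e)]
  · rw [if_pos (by ring)]
  · intro m _ hm
    rw [if_neg (by omega)]
  · intro hβ
    rw [if_pos (by ring)]
    by_contra h
    exact hβ (mem_tWeights v h)

lemma coeff_eval_one (G : (MvPolynomial σ R)[X]) (β : σ →₀ ℕ) :
    (G.eval 1).coeff β = ∑ e ∈ G.support, (G.coeff e).coeff β := by
  simp [Polynomial.eval_eq_sum, Polynomial.sum_def, MvPolynomial.coeff_sum]

variable {v} in
lemma IsTHomogeneous.coeff_coeff {n : ℤ} {G : (MvPolynomial σ R)[X]} (hG : IsTHomogeneous v n G)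
    (e : ℕ) (β : σ →₀ ℕ) :
    (G.coeff e).coeff β = if (e : ℤ) = n - Finsupp.weight v β then (G.eval 1).coeff β else 0 := by
  have hweight : ∀ e', (G.coeff e').coeff β ≠ 0 → (e' : ℤ) = n - Finsupp.weight v β := by
    intro e' h
    have := hG e' h
    omega
  split_ifs with he
  · rw [coeff_eval_one, Finset.sum_eq_single e]
    · intro e' _ hne
      by_contra h
      exact hne (by have := hweight e' h; omega)
    · intro he
      rw [Polynomial.notMem_support_iff.mp he, MvPolynomial.coeff_zero]
  · by_contra h
    exact he (hweight e h)

lemma eval_one_tComponent_map_C_mul (p : R[X]) (F : (MvPolynomial σ R)[X]) (m : ℤ) :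
    (tComponent v m (p.map MvPolynomial.C * F)).eval 1 =
      ∑ j ∈ p.support, p.coeff j • (tComponent v (m - j) F).eval 1 := by
  conv_lhs => rw [p.as_sum_support_C_mul_X_pow]
  rw [Polynomial.map_sum, Finset.sum_mul, map_sum, eval_finsetSum]
  refine Finset.sum_congr rfl fun j _ => ?_
  rw [Polynomial.map_mul, Polynomial.map_C, Polynomial.map_pow, Polynomial.map_X,
    tComponent_mul_of_isTHomogeneous (isTHomogeneous_C_mul_X_pow v _ j)]
  simp [MvPolynomial.smul_eq_C_mul]

end TGrading

lemma Submodule.mem_of_forall_sum_coeff_smul_mem {K M : Type*} [Field K] [AddCommGroup M]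
    [Module K M] {N : Submodule K M} {p : K[X]} (hp : p ≠ 0) {y : ℤ → M}
    (hy : BddBelow {m | y m ∉ N}) (h : ∀ m, ∑ j ∈ p.support, p.coeff j • y (m - j) ∈ N)
    (m : ℤ) : y m ∈ N := by
  by_contra hm
  obtain ⟨b, hb⟩ := hy
  obtain ⟨m₀, hm₀, hmin⟩ :=
    Int.exists_least_of_bdd (P := fun m => y m ∉ N) ⟨b, fun _ hz => hb hz⟩ ⟨m, hm⟩
  set j₀ := p.natTrailingDegree
  have hj₀ : j₀ ∈ p.support := natTrailingDegree_mem_support_of_nonzero hp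
  have hhigher : ∑ j ∈ p.support.erase j₀, p.coeff j • y (m₀ + j₀ - j) ∈ N := by
    refine N.sum_mem fun j hj => N.smul_mem _ (by_contra fun hj' => ?_)
    have hlt : j₀ < j := lt_of_le_of_ne (natTrailingDegree_le_of_mem_supp j
      (Finset.mem_of_mem_erase hj)) (Finset.ne_of_mem_erase hj).symm
    have := hmin _ hj'
    omega
  have hlowest := h (m₀ + j₀)
  rw [← Finset.add_sum_erase _ _ hj₀, add_sub_cancel_right, N.add_mem_iff_left hhigher,
    N.smul_mem_iff (Polynomial.mem_support_iff.mp hj₀)] at hlowest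
  exact hm₀ hlowest

section Homogenization

variable {σ : Type*} (v : σ → ℤ)

lemma wdot_eq_weight_s10 (α : σ →₀ ℕ) : wdot v α = Finsupp.weight v α := by
  simp [wdot, Finsupp.weight_apply, Finsupp.sum, mul_comm]

lemma wdot_le_wdeg_s10 {f : MvPolynomial σ ℂ} {α : σ →₀ ℕ} (hα : α ∈ f.support) :
    wdot v α ≤ wdeg v f := by
  have h := Finset.le_sup (f := fun α => (wdot v α : WithBot ℤ)) hα
  unfold wdeg
  cases hs : f.support.sup fun α => (wdot v α : WithBot ℤ) with
  | bot => rw [hs] at h; exact absurd h (by simp)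
  | coe d => rw [hs] at h; simpa using h

lemma exists_wdot_eq_wdeg {f : MvPolynomial σ ℂ} (hf : f ≠ 0) :
    ∃ α ∈ f.support, wdot v α = wdeg v f := by
  obtain ⟨α, hα, hsup⟩ := Finset.exists_mem_eq_sup f.support (support_nonempty.mpr hf)
    fun α => (wdot v α : WithBot ℤ)
  exact ⟨α, hα, by rw [wdeg, hsup]; rfl⟩

lemma coeff_coeff_homog (f : MvPolynomial σ ℂ) (e : ℕ) (β : σ →₀ ℕ) :
    ((homog v f).coeff e).coeff β = if (wdeg v f - wdot v β).toNat = e then f.coeff β else 0 := by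
  classical
  simp only [homog, finsetSum_coeff, Polynomial.coeff_C_mul_X_pow, MvPolynomial.coeff_sum,
    apply_ite (MvPolynomial.coeff β), MvPolynomial.coeff_monomial, MvPolynomial.coeff_zero]
  rw [Finset.sum_eq_single β (fun α _ hαβ => by simp [hαβ])
    fun hβ => by simp [MvPolynomial.notMem_support_iff.mp hβ]]
  simp [eq_comm]

lemma isTHomogeneous_homog (f : MvPolynomial σ ℂ) : IsTHomogeneous v (wdeg v f) (homog v f) := by
  intro e β hβ
  rw [coeff_coeff_homog] at hβ
  split_ifs at hβ with he
  · have := wdot_le_wdeg_s10 v (MvPolynomial.mem_support_iff.mpr hβ)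
    rw [wdot_eq_weight_s10] at this he
    omega
  · exact absurd rfl hβ

lemma eval_one_homog (f : MvPolynomial σ ℂ) : (homog v f).eval 1 = f := by
  simp only [homog, eval_finsetSum, Polynomial.eval_mul, Polynomial.eval_C, Polynomial.eval_pow,
    Polynomial.eval_X, one_pow, mul_one]
  exact f.support_sum_monomial_coeff

variable {v} in
lemma IsTHomogeneous.eq_X_pow_mul_homog {n : ℤ} {G : (MvPolynomial σ ℂ)[X]}
    (hG : IsTHomogeneous v n G) (hf : G.eval 1 ≠ 0) :
    G = Polynomial.X ^ (n - wdeg v (G.eval 1)).toNat * homog v (G.eval 1) := by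
  obtain ⟨α, hα, hαdeg⟩ := exists_wdot_eq_wdeg v hf
  obtain ⟨e, -, he⟩ := Finset.exists_ne_zero_of_sum_ne_zero
    ((coeff_eval_one G α).symm.trans_ne (MvPolynomial.mem_support_iff.mp hα))
  have hdeg : wdeg v (G.eval 1) ≤ n := by
    have := hG e he
    rw [← hαdeg, wdot_eq_weight_s10]
    omega
  ext e' β
  rw [hG.coeff_coeff, Polynomial.coeff_X_pow_mul', apply_ite (MvPolynomial.coeff β),
    coeff_coeff_homog, MvPolynomial.coeff_zero]
  by_cases hβ : (G.eval 1).coeff β = 0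
  · simp [hβ]
  · have := wdot_le_wdeg_s10 v (MvPolynomial.mem_support_iff.mpr hβ)
    rw [wdot_eq_weight_s10] at this ⊢
    split_ifs <;> first | rfl | omega

variable (I : Ideal (MvPolynomial σ ℂ))

lemma mem_idealHomog_of_isTHomogeneous {n : ℤ} {G : (MvPolynomial σ ℂ)[X]}
    (hG : IsTHomogeneous v n G) (hI : G.eval 1 ∈ I) : G ∈ idealHomog v I := by
  by_cases hf : G.eval 1 = 0
  · have hG0 : G = 0 := by
      ext e β
      rw [hG.coeff_coeff, hf]
      simp
    exact hG0 ▸ zero_mem _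
  · rw [hG.eq_X_pow_mul_homog hf]
    exact Ideal.mul_mem_left _ _ (Ideal.subset_span ⟨_, hI, hf, rfl⟩)

lemma tComponent_mem_idealHomog {G : (MvPolynomial σ ℂ)[X]} (hG : G ∈ idealHomog v I) (m : ℤ) :
    tComponent v m G ∈ idealHomog v I := by
  induction hG using Submodule.span_induction generalizing m with
  | mem x hx =>
    obtain ⟨f, hfI, hf0, rfl⟩ := hx
    rw [(isTHomogeneous_homog v f).tComponent_eq]
    split_ifs
    · exact Ideal.subset_span ⟨f, hfI, hf0, rfl⟩
    · exact zero_mem _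
  | zero => simp
  | add x y _ _ hx hy => simpa using add_mem (hx m) (hy m)
  | smul a x _ hx =>
    rw [smul_eq_mul, ← sum_tComponent v a, Finset.sum_mul, map_sum]
    refine sum_mem fun n _ => ?_
    rw [tComponent_mul_of_isTHomogeneous (isTHomogeneous_tComponent v n a)]
    exact Ideal.mul_mem_left _ _ (hx _)

lemma eval_one_mem_of_mem_idealHomog {G : (MvPolynomial σ ℂ)[X]} (hG : G ∈ idealHomog v I) :
    G.eval 1 ∈ I := by
  induction hG using Submodule.span_induction with
  | mem x hx =>
    obtain ⟨f, hfI, -, rfl⟩ := hx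
    rwa [eval_one_homog]
  | zero => simp
  | add x y _ _ hx hy => simpa using add_mem hx hy
  | smul a x _ hx => simpa using I.mul_mem_left _ hx

lemma mem_idealHomog_iff (G : (MvPolynomial σ ℂ)[X]) :
    G ∈ idealHomog v I ↔ ∀ m, (tComponent v m G).eval 1 ∈ I := by
  refine ⟨fun hG m => eval_one_mem_of_mem_idealHomog v I (tComponent_mem_idealHomog v I hG m),
    fun h => ?_⟩
  rw [← sum_tComponent v G]
  exact sum_mem fun m _ =>
    mem_idealHomog_of_isTHomogeneous v I (isTHomogeneous_tComponent v m G) (h m)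

lemma mem_idealHomog_of_map_C_mul_mem {p : ℂ[X]} (hp : p ≠ 0) {F : (MvPolynomial σ ℂ)[X]}
    (h : p.map MvPolynomial.C * F ∈ idealHomog v I) : F ∈ idealHomog v I := by
  rw [mem_idealHomog_iff] at h ⊢
  have hbdd : BddBelow {m | (tComponent v m F).eval 1 ∉ I} := by
    refine (tWeights v F).bddBelow.mono fun m hm => by_contra fun hm' => hm ?_
    simp [tComponent_eq_zero_of_notMem v hm']
  refine Submodule.mem_of_forall_sum_coeff_smul_mem (N := I.restrictScalars ℂ) hp hbdd fun m => ?_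
  simpa [eval_one_tComponent_map_C_mul] using h m

end Homogenization

/-- For an ideal `I ⊆ ℂ[z₀,…,z_k]` and a weight `v ∈ ℤ^{k+1}`, the
quotient `ℂ[z₀,…,z_k][t]/I_t^v` is flat as a module over `ℂ[t]`, via the natural map
`ℂ[t] → ℂ[z₀,…,z_k][t] → ℂ[z₀,…,z_k][t]/I_t^v`. -/
theorem groebner_degeneration_flat {k : ℕ}
    (I : Ideal (MvPolynomial (Fin (k + 1)) ℂ)) (v : Fin (k + 1) → ℤ) :
    @Module.Flat (Polynomial ℂ)
      (Polynomial (MvPolynomial (Fin (k + 1)) ℂ) ⧸ idealHomog v I) _ _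
      (Module.compHom _
        ((Ideal.Quotient.mk (idealHomog v I)).comp
          (Polynomial.mapRingHom
            (MvPolynomial.C : ℂ →+* MvPolynomial (Fin (k + 1)) ℂ)))) := by
  let _ : Module ℂ[X] ((MvPolynomial (Fin (k + 1)) ℂ)[X] ⧸ idealHomog v I) :=
    Module.compHom _ ((Ideal.Quotient.mk (idealHomog v I)).comp
      (Polynomial.mapRingHom MvPolynomial.C))
  have : Module.IsTorsionFree ℂ[X] ((MvPolynomial (Fin (k + 1)) ℂ)[X] ⧸ idealHomog v I) := by
    refine .of_smul_eq_zero fun p x hpx => or_iff_not_imp_left.mpr fun hp => ?_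
    obtain ⟨F, rfl⟩ := Ideal.Quotient.mk_surjective x
    change Ideal.Quotient.mk _ (p.map MvPolynomial.C) * Ideal.Quotient.mk _ F = 0 at hpx
    rw [← map_mul, Ideal.Quotient.eq_zero_iff_mem] at hpx
    rw [Ideal.Quotient.eq_zero_iff_mem]
    exact mem_idealHomog_of_map_C_mul_mem v I hp hpx
  infer_instance
end
end
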